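/- arXiv:2305.04131 — 2 statements merged into one kernel-verified Lean document; each statement's English description precedes it below -/
import Mathlib

section
/- Let $\Delta(x) = \prod_{1\le i<j\le N}(x_i-x_j)(x_i+x_j)\prod_{k=1}^N x_k$ for $x\in\mathbb{R}^N$ and let $\rho_N = \sum_{i=1}^N(N-i+\tfrac12)e_i$. Then $\frac{1}{N^2}\log \Delta(\rho_N) = \log N + \log 2 - \tfrac32 + o(1)$ as $N\to\infty$. -/
/-!
Reflecting `ρ_N` to the coordinates `i + 1/2`, the two long roots `eᵢ ∓ eⱼ` with `i < j`
contribute `(j - i)(i + j + 1)`, and for fixed `j` these multiply to `(2j)!`; with the short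
root `j + 1/2` this gives `Δ(ρ_N) = ∏_{j<N} (2j+1)!/2`. By Stirling,
`log n! = n log n - n + o(n)`, so the `j`-th factor contributes `M(j+1) - M(j) + o(2j+1)`
to `log Δ(ρ_N)`, where `M(x) = x²(log x + log 2 - 3/2)`. Summing,
`log Δ(ρ_N) - M(N) = o(∑_{j<N} (2j+1)) = o(N²)`.
-/

open Filter

/-- Half-sum of positive roots of `B_N`: `(ρ_N)_i = N - i + 1/2` (one-indexed),
`= N - i - 1/2` for zero-indexed `i : Fin N`. -/
noncomputable def rhoBvec (N : ℕ) : Fin N → ℝ := fun i => (N : ℝ) - (i : ℝ) - 1 / 2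

/-- `Δ(x) = ∏_{i<j}(xᵢ-xⱼ)(xᵢ+xⱼ) ∏ₖ xₖ`, the product of positive roots of `B_N`
evaluated at `x`, evaluated at `x = ρ_N`. -/
noncomputable def DeltaBrho (N : ℕ) : ℝ :=
  (∏ p ∈ Finset.univ.filter (fun p : Fin N × Fin N => p.1 < p.2),
      ((rhoBvec N p.1 - rhoBvec N p.2) * (rhoBvec N p.1 + rhoBvec N p.2))) *
    ∏ k : Fin N, rhoBvec N k

open Finset Real Asymptotics
open scoped Nat

lemma rhoBvec_rev {N : ℕ} (i : Fin N) : rhoBvec N i.rev = i + 1 / 2 := by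
  rw [rhoBvec, Fin.val_rev, Nat.cast_sub (by omega)]
  push_cast
  ring

lemma prod_filter_lt_eq_prod_range {M : Type*} [CommMonoid M] (N : ℕ) (f : ℕ → ℕ → M) :
    ∏ p ∈ univ.filter (fun p : Fin N × Fin N => p.1 < p.2), f p.1 p.2 =
      ∏ j ∈ range N, ∏ i ∈ range j, f i j := by
  rw [prod_filter, Fintype.prod_prod_type_right,
    ← Fin.prod_univ_eq_prod_range (fun j => ∏ i ∈ range j, f i j)]
  refine prod_congr rfl fun j _ => ?_
  simp only [Fin.lt_def]
  rw [Fin.prod_univ_eq_prod_range (fun i => if i < (j : ℕ) then f i j else 1), ← prod_filter]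
  congr 1
  ext i
  simp only [mem_filter, mem_range]
  omega

lemma prod_filter_lt_rev_swap {M : Type*} [CommMonoid M] (N : ℕ) (f : Fin N → Fin N → M) :
    ∏ p ∈ univ.filter (fun p : Fin N × Fin N => p.1 < p.2), f p.1 p.2 =
      ∏ p ∈ univ.filter (fun p : Fin N × Fin N => p.1 < p.2), f p.2.rev p.1.rev := by
  refine prod_nbij' (fun p => (p.2.rev, p.1.rev)) (fun p => (p.2.rev, p.1.rev)) ?_ ?_ ?_ ?_ ?_ <;>
    simp

lemma prod_range_sub_mul_add_eq_factorial (j : ℕ) :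
    ∏ i ∈ range j, (j - i) * (i + j + 1) = (2 * j)! := by
  rw [prod_mul_distrib, ← Nat.descFactorial_eq_prod_range, Nat.descFactorial_self, two_mul,
    ← Nat.factorial_mul_ascFactorial, Nat.ascFactorial_eq_prod_range]
  congr 1
  exact prod_congr rfl fun i _ => by ring

lemma DeltaBrho_eq_prod (N : ℕ) : DeltaBrho N = ∏ a ∈ range N, ((2 * a + 1)! : ℝ) / 2 := by
  have hpairs : ∏ p ∈ univ.filter (fun p : Fin N × Fin N => p.1 < p.2),
      ((rhoBvec N p.1 - rhoBvec N p.2) * (rhoBvec N p.1 + rhoBvec N p.2)) =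
      ∏ j ∈ range N, ((2 * j)! : ℝ) := by
    rw [prod_filter_lt_rev_swap N fun i j =>
      (rhoBvec N i - rhoBvec N j) * (rhoBvec N i + rhoBvec N j)]
    simp only [rhoBvec_rev]
    rw [prod_filter_lt_eq_prod_range N fun i j =>
      ((j : ℝ) + 1 / 2 - (i + 1 / 2)) * (j + 1 / 2 + (i + 1 / 2))]
    refine prod_congr rfl fun j _ => ?_
    rw [← prod_range_sub_mul_add_eq_factorial, Nat.cast_prod]
    refine prod_congr rfl fun i hi => ?_
    rw [Nat.cast_mul, Nat.cast_sub (mem_range.1 hi).le]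
    push_cast
    ring
  have hdiag : ∏ k : Fin N, rhoBvec N k = ∏ a ∈ range N, ((a : ℝ) + 1 / 2) := by
    rw [← Fin.prod_univ_eq_prod_range (fun a => (a : ℝ) + 1 / 2),
      ← Equiv.prod_comp Fin.revPerm]
    simp only [Fin.revPerm_apply, rhoBvec_rev]
  rw [DeltaBrho, hpairs, hdiag, ← prod_mul_distrib]
  refine prod_congr rfl fun a _ => ?_
  rw [Nat.factorial_succ]
  push_cast
  ring

lemma sum_range_two_mul_add_one (N : ℕ) : ∑ a ∈ range N, (2 * (a : ℝ) + 1) = N ^ 2 := by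
  induction N with
  | zero => simp
  | succ N ih =>
    rw [sum_range_succ, ih]
    push_cast
    ring

lemma isLittleO_log_factorial_sub_mul_log :
    (fun n : ℕ => log n ! - (n * log n - n)) =o[atTop] (fun n => (n : ℝ)) := by
  have hstirling : (fun n : ℕ => log (Stirling.stirlingSeq n)) =o[atTop] (fun n => (n : ℝ)) :=
    ((Stirling.tendsto_stirlingSeq_sqrt_pi.log (by positivity)).isBigO_one ℝ).trans_isLittleO
      ((isLittleO_one_left_iff ℝ).2 (tendsto_norm_atTop_atTop.comp tendsto_natCast_atTop_atTop))
  have hlog : (fun n : ℕ => log (2 * n)) =o[atTop] (fun n => (n : ℝ)) :=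
    (isLittleO_log_id_atTop.comp_tendsto
      (tendsto_natCast_atTop_atTop.const_mul_atTop two_pos)).trans_isBigO
      (isBigO_const_mul_self 2 _ _)
  refine (hstirling.add (hlog.const_mul_left (1 / 2))).congr' ?_ EventuallyEq.rfl
  filter_upwards [eventually_ne_atTop 0] with n hn
  have hn' : (n : ℝ) ≠ 0 := Nat.cast_ne_zero.2 hn
  rw [Stirling.log_stirlingSeq_formula, log_div hn' (exp_pos 1).ne', log_exp]
  ring

lemma log_sub_log_le_div_sub_one {x y : ℝ} (hx : 0 < x) (hy : 0 < y) :
    log y - log x ≤ y / x - 1 := by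
  rw [← log_div hy.ne' hx.ne']
  exact log_le_sub_one_of_pos (div_pos hy hx)

noncomputable def mainTerm (x : ℝ) : ℝ := x ^ 2 * (log x + log 2 - 3 / 2)

lemma abs_sub_mainTerm_increment_le {x : ℝ} (hx : 1 ≤ x) :
    |(2 * x + 1) * log (2 * x + 1) - (2 * x + 1) - log 2 - (mainTerm (x + 1) - mainTerm x)|
      ≤ 2 := by
  have hx₀ : 0 < x := by linarith
  have hu₁ := log_sub_log_le_div_sub_one hx₀ (by linarith : 0 < x + 1)
  have hu₂ := log_sub_log_le_div_sub_one (by linarith : 0 < x + 1) hx₀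
  have hv₁ := log_sub_log_le_div_sub_one (by linarith : 0 < x + 1 / 2) (by linarith : 0 < x + 1)
  have hv₂ := log_sub_log_le_div_sub_one (by linarith : 0 < x + 1) (by linarith : 0 < x + 1 / 2)
  rw [div_sub_one (by positivity), le_div_iff₀ (by positivity)] at hu₁ hu₂ hv₁ hv₂
  set u := log (x + 1) - log x
  set v := log (x + 1) - log (x + 1 / 2)
  have hu : x - 1 ≤ x ^ 2 * u ∧ x ^ 2 * u ≤ x := by
    constructor <;> nlinarith
  have hv : 0 ≤ (2 * x + 1) * v ∧ (2 * x + 1) * v ≤ 1 := by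
    constructor <;> nlinarith
  have hsplit : (2 * x + 1) * log (2 * x + 1) - (2 * x + 1) - log 2 -
      (mainTerm (x + 1) - mainTerm x) = -((2 * x + 1) * v) - (x ^ 2 * u - x) + 1 / 2 - log 2 := by
    rw [show 2 * x + 1 = 2 * (x + 1 / 2) by ring, log_mul two_ne_zero (by linarith), mainTerm,
      mainTerm]
    ring
  have hlog2 : 0 ≤ log 2 ∧ log 2 ≤ 1 :=
    ⟨log_nonneg one_le_two, by linarith [log_le_sub_one_of_pos two_pos]⟩
  rw [hsplit, abs_le]
  constructor <;> linarith

lemma isLittleO_log_factorial_div_two_sub_mainTerm :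
    (fun a : ℕ => log (((2 * a + 1)! : ℝ) / 2) - (mainTerm (a + 1) - mainTerm a)) =o[atTop]
      (fun a => 2 * (a : ℝ) + 1) := by
  have hodd : Tendsto (fun a : ℕ => 2 * (a : ℝ) + 1) atTop atTop :=
    tendsto_atTop_add_const_right _ 1 (tendsto_natCast_atTop_atTop.const_mul_atTop two_pos)
  have hstirling : (fun a : ℕ => log ((2 * a + 1)! : ℝ) -
      ((2 * (a : ℝ) + 1) * log (2 * a + 1) - (2 * a + 1))) =o[atTop]
      (fun a => 2 * (a : ℝ) + 1) := by
    simpa [Function.comp_def] using isLittleO_log_factorial_sub_mul_log.comp_tendsto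
      (tendsto_atTop_mono (fun a => show a ≤ 2 * a + 1 by omega) tendsto_id)
  have hbounded : (fun a : ℕ => (2 * (a : ℝ) + 1) * log (2 * a + 1) - (2 * a + 1) - log 2 -
      (mainTerm (a + 1) - mainTerm a)) =O[atTop] (fun _ => (1 : ℝ)) := by
    refine IsBigO.of_bound 2 ?_
    filter_upwards [eventually_ge_atTop 1] with a ha
    simpa using abs_sub_mainTerm_increment_le (Nat.one_le_cast.2 ha)
  refine (hstirling.add (hbounded.trans_isLittleO ?_)).congr_left fun a => ?_
  · exact (isLittleO_one_left_iff ℝ).2 (tendsto_norm_atTop_atTop.comp hodd)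
  · rw [log_div (by positivity) two_ne_zero]
    ring

lemma isLittleO_log_DeltaBrho_sub_mainTerm :
    (fun N : ℕ => log (DeltaBrho N) - mainTerm N) =o[atTop] (fun N => (N : ℝ) ^ 2) := by
  have h := isLittleO_log_factorial_div_two_sub_mainTerm.sum_range (fun a => by positivity)
    (by
      simp only [sum_range_two_mul_add_one]
      exact (tendsto_pow_atTop two_ne_zero).comp tendsto_natCast_atTop_atTop)
  simp only [sum_range_two_mul_add_one] at h
  refine h.congr_left fun N => ?_
  have htelescope := sum_range_sub (fun a : ℕ => mainTerm a) N
  push_cast at htelescope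
  rw [sum_sub_distrib, htelescope, DeltaBrho_eq_prod, log_prod fun a _ => by positivity]
  simp [mainTerm]

/-- `(1/N²) log Δ(ρ_N) = log N + log 2 - 3/2 + o(1)` as `N → ∞`. -/
theorem stmt6 :
    Tendsto (fun N : ℕ =>
        (1 / (N : ℝ) ^ 2) * Real.log (DeltaBrho N) -
          (Real.log N + Real.log 2 - 3 / 2))
      atTop (nhds 0) := by
  refine isLittleO_log_DeltaBrho_sub_mainTerm.tendsto_div_nhds_zero.congr' ?_
  filter_upwards [eventually_ne_atTop 0] with N hN
  have : (N : ℝ) ≠ 0 := Nat.cast_ne_zero.2 hN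
  rw [mainTerm]
  field_simp
end

section
/- Let $T_\mu, T_{m}:(0,1)\to\mathbb{R}$ be bounded measurable functions and $T_Y:(0,1)\to\mathbb{R}$ a nondecreasing differentiable function with $T_Y'\ge 0$. Suppose there is a constant $\mathfrak{c}\in(0,1/2]$ such that $\varphi(y) := \int_y^1 (T_\mu(x)-T_m(x))\,dx$ satisfies $\varphi(y)\le -\tfrac{\mathfrak c}{2}(1-y)$ for $1-\tfrac{\mathfrak c}{2}\le y\le 1$, $\varphi(y)\le -\tfrac{\mathfrak c}{2}$ for $\tfrac{\mathfrak c}{2}\le y\le 1-\tfrac{\mathfrak c}{2}$, and $\varphi(y)\le -\tfrac{\mathfrak c}{2}y$ for $0\le y\le \tfrac{\mathfrak c}{2}$. Suppose further $T_Y$ is odd about $1/2$ with $\int_{1/2}^1(1-y)T_Y'(y)\,dy = \tfrac12$. Then $\int_0^1 (T_\mu(x)-T_m(x))T_Y(x)\,dx \le -\tfrac{\mathfrak c}{2}$. -/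
/-!
The three bounds on `φ` combine into `φ(y) ≤ -(𝔠/2) min(y, 1 - y)` on `(0,1)`, so after the
integration by parts and `T_Y' ≥ 0` it suffices that `∫₀¹ min(y, 1 - y) T_Y'(y) dy = 1`.
Oddness of `T_Y` about `1/2` makes `T_Y'` even about `1/2`, hence the weight
`min(y, 1 - y) T_Y'(y)` is symmetric, and its integral is twice the normalized integral over
`(1/2, 1)`. The integrability on `(1/2, 1)` comes for free, since that integral is nonzero.
-/

open MeasureTheory Set

section Reflection

variable {a b : ℝ}

lemma hasDerivAt_reflect_eq_of_odd {f f' : ℝ → ℝ} (hf : ∀ x ∈ Ioo a b, HasDerivAt f (f' x) x)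
    (hodd : ∀ x ∈ Ioo a b, f (a + b - x) = -f x) {y : ℝ} (hy : y ∈ Ioo a b) :
    f' (a + b - y) = f' y := by
  have hy' : a + b - y ∈ Ioo a b := ⟨by linarith [hy.2], by linarith [hy.1]⟩
  have hreflect : HasDerivAt (fun z => -f (a + b - z)) (f' (a + b - y)) y := by
    have h := ((hf _ hy').comp y ((hasDerivAt_id y).const_sub (a + b))).neg
    rwa [mul_neg, mul_one, neg_neg] at h
  have heq : f =ᶠ[nhds y] fun z => -f (a + b - z) := by
    filter_upwards [isOpen_Ioo.mem_nhds hy] with z hz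
    rw [hodd z hz, neg_neg]
  exact (hreflect.congr_of_eventuallyEq heq).unique (hf y hy)

variable {g : ℝ → ℝ}

lemma mem_Ioo_of_mem_uIoo_left_half (hab : a ≤ b) {x : ℝ} (hx : x ∈ uIoo a ((a + b) / 2)) :
    x ∈ Ioo a b := by
  rw [uIoo_of_le (by linarith)] at hx
  exact ⟨hx.1, by linarith [hx.2]⟩

lemma IntervalIntegrable.left_half_of_reflect (hab : a ≤ b)
    (hg : ∀ x ∈ Ioo a b, g (a + b - x) = g x) (h : IntervalIntegrable g volume ((a + b) / 2) b) :
    IntervalIntegrable g volume a ((a + b) / 2) := by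
  have h' := h.comp_sub_left (a + b)
  rw [show a + b - (a + b) / 2 = (a + b) / 2 by ring, add_sub_cancel_right] at h'
  exact h'.symm.congr_uIoo fun x hx => hg x (mem_Ioo_of_mem_uIoo_left_half hab hx)

lemma intervalIntegral.integral_left_half_eq_of_reflect (hab : a ≤ b)
    (hg : ∀ x ∈ Ioo a b, g (a + b - x) = g x) :
    ∫ x in a..(a + b) / 2, g x = ∫ x in (a + b) / 2..b, g x := by
  calc ∫ x in a..(a + b) / 2, g x = ∫ x in a..(a + b) / 2, g (a + b - x) :=
        integral_congr_uIoo fun x hx => (hg x (mem_Ioo_of_mem_uIoo_left_half hab hx)).symm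
    _ = ∫ x in (a + b) / 2..b, g x := by
        rw [integral_comp_sub_left]
        congr 1 <;> ring

lemma integrableOn_Ioo_of_reflect (hab : a ≤ b) (hg : ∀ x ∈ Ioo a b, g (a + b - x) = g x)
    (h : IntegrableOn g (Ioo ((a + b) / 2) b)) : IntegrableOn g (Ioo a b) := by
  have hright : IntervalIntegrable g volume ((a + b) / 2) b :=
    (intervalIntegrable_iff_integrableOn_Ioo_of_le (by linarith)).2 h
  exact (intervalIntegrable_iff_integrableOn_Ioo_of_le hab).1
    ((hright.left_half_of_reflect hab hg).trans hright)

lemma setIntegral_Ioo_eq_two_mul_of_reflect (hab : a ≤ b)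
    (hg : ∀ x ∈ Ioo a b, g (a + b - x) = g x) (h : IntegrableOn g (Ioo ((a + b) / 2) b)) :
    ∫ x in Ioo a b, g x = 2 * ∫ x in Ioo ((a + b) / 2) b, g x := by
  have hright : IntervalIntegrable g volume ((a + b) / 2) b :=
    (intervalIntegrable_iff_integrableOn_Ioo_of_le (by linarith)).2 h
  rw [← integral_Ioc_eq_integral_Ioo, ← integral_Ioc_eq_integral_Ioo,
    ← intervalIntegral.integral_of_le hab, ← intervalIntegral.integral_of_le (by linarith),
    ← intervalIntegral.integral_add_adjacent_intervals (hright.left_half_of_reflect hab hg) hright,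
    intervalIntegral.integral_left_half_eq_of_reflect hab hg, two_mul]

end Reflection

lemma le_neg_mul_min_of_piecewise_bounds {phi : ℝ → ℝ} {δ y : ℝ} (hδ : 0 ≤ δ)
    (hright : ∀ y ∈ Icc (1 - δ) 1, phi y ≤ -δ * (1 - y))
    (hmid : ∀ y ∈ Icc δ (1 - δ), phi y ≤ -δ)
    (hleft : ∀ y ∈ Icc 0 δ, phi y ≤ -δ * y) (hy : y ∈ Icc 0 1) :
    phi y ≤ -δ * min y (1 - y) := by
  rcases le_or_gt y δ with hyδ | hyδ
  · nlinarith [hleft y ⟨hy.1, hyδ⟩, min_le_left y (1 - y)]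
  rcases le_or_gt y (1 - δ) with hyδ' | hyδ'
  · nlinarith [hmid y ⟨hyδ.le, hyδ'⟩, min_le_left y (1 - y)]
  · nlinarith [hright y ⟨hyδ'.le, hy.2⟩, min_le_right y (1 - y)]

lemma integrableOn_min_mul_and_integral_eq_two_mul {g : ℝ → ℝ}
    (hg : ∀ y ∈ Ioo (0:ℝ) 1, g (1 - y) = g y)
    (h : IntegrableOn (fun y => (1 - y) * g y) (Ioo (1 / 2) 1)) :
    IntegrableOn (fun y => min y (1 - y) * g y) (Ioo 0 1) ∧
      ∫ y in Ioo (0:ℝ) 1, min y (1 - y) * g y = 2 * ∫ y in Ioo (1 / 2) 1, (1 - y) * g y := by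
  set w : ℝ → ℝ := fun y => min y (1 - y) * g y
  have hw_symm : ∀ y ∈ Ioo (0:ℝ) 1, w (0 + 1 - y) = w y := fun y hy => by
    simp only [w, zero_add, sub_sub_cancel, hg y hy, min_comm]
  have hw_right : EqOn (fun y => (1 - y) * g y) w (Ioo (1 / 2) 1) := fun y hy => by
    simp only [w, min_eq_right (by linarith [hy.1] : 1 - y ≤ y)]
  have hw_right_int : IntegrableOn w (Ioo ((0 + 1) / 2) 1) := by
    rw [zero_add]
    exact h.congr_fun hw_right measurableSet_Ioo
  refine ⟨integrableOn_Ioo_of_reflect zero_le_one hw_symm hw_right_int, ?_⟩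
  rw [setIntegral_Ioo_eq_two_mul_of_reflect zero_le_one hw_symm hw_right_int, zero_add,
    ← setIntegral_congr_fun measurableSet_Ioo hw_right]

theorem stmt13_general (Tmu Tm TY TY' phi : ℝ → ℝ) (c : ℝ) (hc0 : 0 < c)
    (hYderiv : ∀ y ∈ Set.Ioo (0:ℝ) 1, HasDerivAt TY (TY' y) y)
    (hY'nonneg : ∀ y ∈ Set.Ioo (0:ℝ) 1, 0 ≤ TY' y)
    (hYodd : ∀ y ∈ Set.Ioo (0:ℝ) 1, TY (1 - y) = -TY y)
    (hb1 : ∀ y ∈ Set.Icc (1 - c / 2) 1, phi y ≤ -(c / 2) * (1 - y))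
    (hb2 : ∀ y ∈ Set.Icc (c / 2) (1 - c / 2), phi y ≤ -(c / 2))
    (hb3 : ∀ y ∈ Set.Icc (0:ℝ) (c / 2), phi y ≤ -(c / 2) * y)
    (hIBP : ∫ x in Set.Ioo (0:ℝ) 1, (Tmu x - Tm x) * TY x
      = ∫ y in Set.Ioo (0:ℝ) 1, TY' y * phi y)
    (hhalf : ∫ y in Set.Ioo ((1:ℝ)/2) 1, (1 - y) * TY' y = 1 / 2)
    (hInt1 : IntegrableOn (fun y => TY' y * phi y) (Set.Ioo 0 1)) :
    ∫ x in Set.Ioo (0:ℝ) 1, (Tmu x - Tm x) * TY x ≤ -(c / 2) := by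
  have hsym : ∀ y ∈ Ioo (0:ℝ) 1, TY' (1 - y) = TY' y := fun y hy => by
    simpa using hasDerivAt_reflect_eq_of_odd hYderiv (by simpa using hYodd) hy
  have hright_int : IntegrableOn (fun y => (1 - y) * TY' y) (Ioo (1 / 2) 1) := by
    by_contra h
    rw [integral_undef h] at hhalf
    norm_num at hhalf
  obtain ⟨hw_int, hw_total⟩ := integrableOn_min_mul_and_integral_eq_two_mul hsym hright_int
  rw [hhalf, mul_one_div_cancel two_ne_zero] at hw_total
  set w : ℝ → ℝ := fun y => min y (1 - y) * TY' y
  have hpointwise : ∀ y ∈ Ioo (0:ℝ) 1, TY' y * phi y ≤ -(c / 2) * w y := fun y hy => by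
    have hphi_le :=
      le_neg_mul_min_of_piecewise_bounds (by linarith) hb1 hb2 hb3 (Ioo_subset_Icc_self hy)
    calc TY' y * phi y ≤ TY' y * (-(c / 2) * min y (1 - y)) :=
          mul_le_mul_of_nonneg_left hphi_le (hY'nonneg y hy)
      _ = -(c / 2) * w y := by ring
  rw [hIBP]
  calc ∫ y in Ioo (0:ℝ) 1, TY' y * phi y ≤ ∫ y in Ioo (0:ℝ) 1, -(c / 2) * w y :=
        setIntegral_mono_on hInt1 (hw_int.const_mul _) measurableSet_Ioo hpointwise
    _ = -(c / 2) := by rw [integral_const_mul, hw_total, mul_one]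

/-- Under the strong limiting Schur–Horn-type bounds on
`φ(y) = ∫_y^1 (T_μ - T_m)`, with `T_Y` nondecreasing differentiable, odd about
`1/2`, normalized by `∫_{1/2}^1 (1-y) T_Y'(y) dy = 1/2`, and granting the
integration-by-parts identity (as in the paper), one gets
`∫₀¹ (T_μ - T_m) T_Y ≤ -𝔠/2`. -/
theorem stmt13 (Tmu Tm TY TY' phi : ℝ → ℝ) (c : ℝ) (hc0 : 0 < c) (hc1 : c ≤ 1 / 2)
    (hmuMeas : Measurable Tmu) (hmMeas : Measurable Tm)
    (hbdd : ∃ M : ℝ, ∀ x ∈ Set.Ioo (0:ℝ) 1, |Tmu x| ≤ M ∧ |Tm x| ≤ M)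
    (hYderiv : ∀ y ∈ Set.Ioo (0:ℝ) 1, HasDerivAt TY (TY' y) y)
    (hYmono : MonotoneOn TY (Set.Ioo 0 1))
    (hY'nonneg : ∀ y ∈ Set.Ioo (0:ℝ) 1, 0 ≤ TY' y)
    (hYodd : ∀ y ∈ Set.Ioo (0:ℝ) 1, TY (1 - y) = -TY y)
    (hphi : ∀ y : ℝ, phi y = ∫ x in Set.Ioo y 1, (Tmu x - Tm x))
    (hb1 : ∀ y ∈ Set.Icc (1 - c / 2) 1, phi y ≤ -(c / 2) * (1 - y))
    (hb2 : ∀ y ∈ Set.Icc (c / 2) (1 - c / 2), phi y ≤ -(c / 2))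
    (hb3 : ∀ y ∈ Set.Icc (0:ℝ) (c / 2), phi y ≤ -(c / 2) * y)
    (hIBP : ∫ x in Set.Ioo (0:ℝ) 1, (Tmu x - Tm x) * TY x
      = ∫ y in Set.Ioo (0:ℝ) 1, TY' y * phi y)
    (hhalf : ∫ y in Set.Ioo ((1:ℝ)/2) 1, (1 - y) * TY' y = 1 / 2)
    (hInt1 : IntegrableOn (fun y => TY' y * phi y) (Set.Ioo 0 1))
    (hInt2 : IntegrableOn (fun y => (1 - y) * TY' y) (Set.Ioo (1/2) 1)) :
    ∫ x in Set.Ioo (0:ℝ) 1, (Tmu x - Tm x) * TY x ≤ -(c / 2) :=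
  stmt13_general Tmu Tm TY TY' phi c hc0 hYderiv hY'nonneg hYodd hb1 hb2 hb3 hIBP hhalf hInt1
end
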